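/- arXiv:0808.4066 — 3 statements merged into one kernel-verified Lean document; each statement's English description precedes it below -/
import Mathlib

section
/- For p > i and q > i with p ≠ q, the functions G_{p,i} and G_{q,i} satisfy G_{p,i}·G_{q,i} = 0, where G_{p,i}(x₁,…,x_N) = θ_R̃(x_p - x_i) · ∏_{j < p, j ≠ i} (1 - θ_{2R̃}(x_j - x_p)), and θ_r is the indicator of {|x| ≤ r}. Consequently, ∏_{p > i} (1 + (2M-1)G_{p,i}) ≤ 2M for any M ≥ 1. -/
/-!
Each `G p` is a product of indicators, hence an idempotent real number, i.e. `0` or `1`.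
If `i < p < q` and both `G p` and `G q` were `1`, then `x p` and `x q` would lie within `R` of
`x i`, hence within `2R` of each other, while the factor `j = p` of `G q` forces them to be more
than `2R` apart. So the `G p` with `p > i` are orthogonal idempotents; for such a family
`∏ (1 + c e_p) = 1 + c ∑ e_p`, and `∑ e_p` is again an idempotent real, hence at most `1`.
-/

open Finset

lemma OrthogonalIdempotents.prod_one_add_mul {R I : Type*} [CommSemiring R] {e : I → R}
    (he : OrthogonalIdempotents e) (c : R) (s : Finset I) :
    ∏ i ∈ s, (1 + c * e i) = 1 + c * ∑ i ∈ s, e i := by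
  induction s using Finset.cons_induction with
  | empty => simp
  | cons a s has ih =>
    have hzero : e a * ∑ i ∈ s, e i = 0 := he.mul_sum_of_notMem has
    calc ∏ i ∈ s.cons a has, (1 + c * e i)
        = 1 + c * (e a + ∑ i ∈ s, e i) + c ^ 2 * (e a * ∑ i ∈ s, e i) := by
          rw [prod_cons, ih]; ring
      _ = 1 + c * ∑ i ∈ s.cons a has, e i := by rw [hzero, mul_zero, add_zero, sum_cons]

lemma prod_one_add_mul_le_of_pairwise_mul_eq_zero {I : Type*} {s : Finset I} {e : I → ℝ}
    (hidem : ∀ p ∈ s, IsIdempotentElem (e p)) (hortho : (s : Set I).Pairwise (e · * e · = 0))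
    {c : ℝ} (hc : 0 ≤ c) :
    ∏ p ∈ s, (1 + c * e p) ≤ 1 + c := by
  have he : OrthogonalIdempotents fun p : s => e p :=
    ⟨fun p => hidem p p.2, fun p q hpq => hortho p.2 q.2 (Subtype.coe_ne_coe.mpr hpq)⟩
  have hsum : ∑ p : s, e p ≤ 1 := by
    rcases IsIdempotentElem.iff_eq_zero_or_one.mp (he.isIdempotentElem_sum (s := univ))
      with h | h <;> linarith
  rw [← prod_coe_sort, he.prod_one_add_mul]
  gcongr
  simpa using mul_le_mul_of_nonneg_left hsum hc

section BallIndicator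

variable {E : Type*} [Norm E]

noncomputable def ballIndicator (r : ℝ) (y : E) : ℝ := if ‖y‖ ≤ r then 1 else 0

variable {r : ℝ} {y : E}

lemma isIdempotentElem_ballIndicator : IsIdempotentElem (ballIndicator r y) := by
  unfold ballIndicator; split_ifs <;> simp [IsIdempotentElem]

lemma ballIndicator_ne_zero_iff : ballIndicator r y ≠ 0 ↔ ‖y‖ ≤ r := by
  unfold ballIndicator; split_ifs <;> simp [*]

lemma one_sub_ballIndicator_ne_zero_iff : 1 - ballIndicator r y ≠ 0 ↔ r < ‖y‖ := by
  unfold ballIndicator; split_ifs <;> simp [*, not_le.mp]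

end BallIndicator

section IsolatedNeighbour

variable {ι E : Type*} [Fintype ι] [LinearOrder ι] [SeminormedAddCommGroup E]

/-- The paper's `G_{p,i}`. -/
noncomputable def isolatedNeighbourIndicator (R : ℝ) (x : ι → E) (i p : ι) : ℝ :=
  ballIndicator R (x p - x i) *
    ∏ j ∈ univ.filter (fun j => j < p ∧ j ≠ i), (1 - ballIndicator (2 * R) (x j - x p))

variable {R : ℝ} {x : ι → E} {i p q : ι}

lemma isIdempotentElem_isolatedNeighbourIndicator :
    IsIdempotentElem (isolatedNeighbourIndicator R x i p) :=
  isIdempotentElem_ballIndicator.mul <|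
    prod_induction _ IsIdempotentElem (fun _ _ ha hb => ha.mul hb) .one
      fun _ _ => isIdempotentElem_ballIndicator.one_sub

lemma isolatedNeighbourIndicator_mul_eq_zero_of_lt (hp : p ≠ i) (hpq : p < q) :
    isolatedNeighbourIndicator R x i p * isolatedNeighbourIndicator R x i q = 0 := by
  by_contra hne
  obtain ⟨hGp, hGq⟩ := mul_ne_zero_iff.mp hne
  have hnear_p : ‖x p - x i‖ ≤ R := ballIndicator_ne_zero_iff.mp (left_ne_zero_of_mul hGp)
  have hnear_q : ‖x q - x i‖ ≤ R := ballIndicator_ne_zero_iff.mp (left_ne_zero_of_mul hGq)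
  have hfar : 2 * R < ‖x p - x q‖ := one_sub_ballIndicator_ne_zero_iff.mp <|
    prod_ne_zero_iff.mp (right_ne_zero_of_mul hGq) p (by simp [hpq, hp])
  have htriangle : ‖x p - x q‖ ≤ ‖x p - x i‖ + ‖x q - x i‖ := by
    simpa using norm_sub_le (x p - x i) (x q - x i)
  linarith

lemma isolatedNeighbourIndicator_mul_eq_zero (hp : p ≠ i) (hq : q ≠ i) (hpq : p ≠ q) :
    isolatedNeighbourIndicator R x i p * isolatedNeighbourIndicator R x i q = 0 := by
  rcases hpq.lt_or_gt with h | h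
  · exact isolatedNeighbourIndicator_mul_eq_zero_of_lt hp h
  · rw [mul_comm]; exact isolatedNeighbourIndicator_mul_eq_zero_of_lt hq h

end IsolatedNeighbour

theorem stmt_4_general (N : ℕ) (Rt M : ℝ) (hM : 1 ≤ M)
    (x : Fin N → EuclideanSpace ℝ (Fin 3)) (i : Fin N)
    (θ : ℝ → EuclideanSpace ℝ (Fin 3) → ℝ)
    (hθ : ∀ r y, θ r y = if ‖y‖ ≤ r then 1 else 0)
    (G : Fin N → ℝ)
    (hG : ∀ p, G p = θ Rt (x p - x i) *
      ∏ j ∈ Finset.univ.filter (fun j => j < p ∧ j ≠ i),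
        (1 - θ (2 * Rt) (x j - x p))) :
    (∀ p q : Fin N, i < p → i < q → p ≠ q → G p * G q = 0) ∧
    ∏ p ∈ Finset.univ.filter (fun p => i < p), (1 + (2 * M - 1) * G p) ≤ 2 * M := by
  obtain rfl : θ = ballIndicator := funext₂ hθ
  obtain rfl : G = isolatedNeighbourIndicator Rt x i := funext hG
  refine ⟨fun p q hp hq hpq => isolatedNeighbourIndicator_mul_eq_zero hp.ne' hq.ne' hpq, ?_⟩
  calc _ ≤ 1 + (2 * M - 1) :=
        prod_one_add_mul_le_of_pairwise_mul_eq_zero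
          (fun _ _ => isIdempotentElem_isolatedNeighbourIndicator)
          (fun p hp q hq => isolatedNeighbourIndicator_mul_eq_zero
            (mem_filter.mp hp).2.ne' (mem_filter.mp hq).2.ne')
          (by linarith)
    _ = 2 * M := by ring

/-- For `p, q > i`, `p ≠ q`, the functions `G_{p,i}` and `G_{q,i}` have disjoint
supports, and hence `∏_{p>i} (1 + (2M-1)G_{p,i}) ≤ 2M` for `M ≥ 1`. -/
theorem stmt_4 (N : ℕ) (Rt M : ℝ) (hRt : 0 < Rt) (hM : 1 ≤ M)
    (x : Fin N → EuclideanSpace ℝ (Fin 3)) (i : Fin N)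
    (θ : ℝ → EuclideanSpace ℝ (Fin 3) → ℝ)
    (hθ : ∀ r y, θ r y = if ‖y‖ ≤ r then 1 else 0)
    (G : Fin N → ℝ)
    (hG : ∀ p, G p = θ Rt (x p - x i) *
      ∏ j ∈ Finset.univ.filter (fun j => j < p ∧ j ≠ i),
        (1 - θ (2 * Rt) (x j - x p))) :
    (∀ p q : Fin N, i < p → i < q → p ≠ q → G p * G q = 0) ∧
    ∏ p ∈ Finset.univ.filter (fun p => i < p), (1 + (2 * M - 1) * G p) ≤ 2 * M :=
  stmt_4_general N Rt M hM x i θ hθ G hG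
end

section
/- Pigeonhole bound for the soft-core replacement: for any x ∈ ℝ³ and points {x_i}_{i ∈ π₂} ⊂ ℝ³, if there exists i ∈ π₂' with |x - x_i| ≤ R₀a (where π₂' = {j ∈ π₂ : ∃ cube B_n with d(x_j, B_n) ≤ R₀a and |G(B_n)| ≤ n₁}), then Σ_{i ∈ π₂} θ_{R₀a}(x - x_i) ≤ n₁. Here G(B_n) achieves the maximum of |{i ∈ π₂ : |x_i - y| ≤ R₀a}| over y with d(y, B_n) ≤ 2R₀a. -/
open scoped Classical

theorem stmt_13_general {ι κ : Type*}
    (R₀ a : ℝ) (n₁ : ℕ)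
    (π₂ : Finset ι) (x : ι → EuclideanSpace ℝ (Fin 3))
    (B : κ → Set (EuclideanSpace ℝ (Fin 3)))
    (Gcard : κ → ℕ)
    (hmax : ∀ (n : κ) (y : EuclideanSpace ℝ (Fin 3)),
      Metric.infDist y (B n) ≤ 2 * (R₀ * a) →
      (π₂.filter (fun i => ‖x i - y‖ ≤ R₀ * a)).card ≤ Gcard n) :
    ∀ p : EuclideanSpace ℝ (Fin 3),
      (∃ i ∈ π₂, (∃ n : κ, Metric.infDist (x i) (B n) ≤ R₀ * a ∧ Gcard n ≤ n₁) ∧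
        ‖p - x i‖ ≤ R₀ * a) →
      (π₂.filter (fun i => ‖p - x i‖ ≤ R₀ * a)).card ≤ n₁ := by
  rintro p ⟨i, -, ⟨n, hin, hGn⟩, hpi⟩
  have hpn : Metric.infDist p (B n) ≤ 2 * (R₀ * a) :=
    calc Metric.infDist p (B n) ≤ Metric.infDist (x i) (B n) + dist p (x i) :=
          Metric.infDist_le_infDist_add_dist
      _ ≤ R₀ * a + R₀ * a := add_le_add hin (by rwa [dist_eq_norm])
      _ = 2 * (R₀ * a) := by ring
  simp only [norm_sub_rev p]
  exact (hmax n p hpn).trans hGn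

/-- Pigeonhole bound for the soft-core replacement: if `x` is within `R₀a` of some
particle of `π₂'` (a particle near a cube whose maximal local particle number is
`≤ n₁`), then at most `n₁` particles of `π₂` are within `R₀a` of `x`. -/
theorem stmt_13 {ι κ : Type*} [Fintype ι]
    (R₀ a : ℝ) (hR₀ : 0 < R₀) (ha : 0 < a) (n₁ : ℕ)
    (π₂ : Finset ι) (x : ι → EuclideanSpace ℝ (Fin 3))
    (B : κ → Set (EuclideanSpace ℝ (Fin 3)))
    (hBne : ∀ n, (B n).Nonempty)
    (Gcard : κ → ℕ)
    (hmax : ∀ (n : κ) (y : EuclideanSpace ℝ (Fin 3)),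
      Metric.infDist y (B n) ≤ 2 * (R₀ * a) →
      (π₂.filter (fun i => ‖x i - y‖ ≤ R₀ * a)).card ≤ Gcard n) :
    ∀ p : EuclideanSpace ℝ (Fin 3),
      (∃ i ∈ π₂, (∃ n : κ, Metric.infDist (x i) (B n) ≤ R₀ * a ∧ Gcard n ≤ n₁) ∧
        ‖p - x i‖ ≤ R₀ * a) →
      (π₂.filter (fun i => ‖p - x i‖ ≤ R₀ * a)).card ≤ n₁ :=
  stmt_13_general R₀ a n₁ π₂ x B Gcard hmax
end

section
/- If a continuous, compactly supported, spherically symmetric potential w : ℝ³ → ℝ is stable, i.e. there exists C such that Σ_{1≤i≠j≤N} w(x_i - x_j) ≥ -CN for all N and all configurations, and w takes a negative value somewhere, then w(0) > 0. -/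
open scoped Classical

/-!
Put `n` particles at `0` and `n` at `x₀`. Since `w(-x₀) = w(x₀)` by radial symmetry, the pair
sum is `n² (2 w(0) + 2 w(x₀)) - 2n w(0)`, and a lower bound `-2Cn` for all `n` forces the
coefficient of `n²` to be nonnegative, so `w(0) ≥ -w(x₀) > 0`.
-/

open Finset

def pairSum {ι E : Type*} [Fintype ι] [DecidableEq ι] [Sub E] (w : E → ℝ) (x : ι → E) : ℝ :=
  ∑ i, ∑ j, if i ≠ j then w (x i - x j) else 0

def IsStable {E : Type*} [Sub E] (w : E → ℝ) : Prop :=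
  ∃ C : ℝ, ∀ (N : ℕ) (x : Fin N → E), -(C * N) ≤ pairSum w x

section pairSum

variable {ι κ E : Type*} [Fintype ι] [DecidableEq ι] [Fintype κ] [DecidableEq κ]

theorem pairSum_comp_equiv [Sub E] (w : E → ℝ) (x : κ → E) (e : ι ≃ κ) :
    pairSum w (x ∘ e) = pairSum w x :=
  Fintype.sum_equiv e _ _ fun _ => Fintype.sum_equiv e _ _ fun _ => by
    simp [e.injective.ne_iff]

theorem pairSum_eq_sum_sub [AddGroup E] (w : E → ℝ) (x : ι → E) :
    pairSum w x = ∑ i, ∑ j, w (x i - x j) - Fintype.card ι * w 0 := by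
  simp only [pairSum, ← sum_filter, filter_ne, sum_erase_eq_sub (mem_univ _), sub_self,
    sum_sub_distrib, sum_const, card_univ, nsmul_eq_mul]

theorem pairSum_sumElim_const [AddGroup E] (w : E → ℝ) (y z : E) :
    pairSum w (Sum.elim (fun _ : ι => y) (fun _ : ι => z)) =
      Fintype.card ι ^ 2 * (2 * w 0 + w (y - z) + w (z - y)) -
        2 * Fintype.card ι * w 0 := by
  simp [pairSum_eq_sum_sub, Fintype.sum_sum_type]
  ring

end pairSum

theorem nonneg_of_forall_nat_mul_le_mul_sq {a b : ℝ} (h : ∀ n : ℕ, a * n ≤ b * n ^ 2) :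
    0 ≤ b := by
  by_contra! hb
  obtain ⟨n, hn⟩ := exists_nat_gt (a / b)
  have hle := h (n + 1)
  have hlt : (n + 1) * b < a := (div_lt_iff_of_neg hb).mp (hn.trans (lt_add_one _))
  push_cast at hle
  nlinarith

theorem IsStable.zero_le_two_mul_apply_zero_add {E : Type*} [AddGroup E] {w : E → ℝ}
    (hw : IsStable w) (y z : E) : 0 ≤ 2 * w 0 + w (y - z) + w (z - y) := by
  obtain ⟨C, hC⟩ := hw
  refine nonneg_of_forall_nat_mul_le_mul_sq (a := 2 * w 0 - 2 * C) fun n => ?_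
  have h := hC (n + n) (Sum.elim (fun _ : Fin n => y) (fun _ => z) ∘ finSumFinEquiv.symm)
  rw [pairSum_comp_equiv, pairSum_sumElim_const, Fintype.card_fin] at h
  push_cast at h
  linarith

theorem stmt_16_general (w : EuclideanSpace ℝ (Fin 3) → ℝ)
    (hrad : ∀ x y : EuclideanSpace ℝ (Fin 3), ‖x‖ = ‖y‖ → w x = w y)
    (hstable : ∃ Cst : ℝ, ∀ (N : ℕ) (x : Fin N → EuclideanSpace ℝ (Fin 3)),
      -(Cst * N) ≤ ∑ i : Fin N, ∑ j : Fin N,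
        (if i ≠ j then w (x i - x j) else 0))
    (hneg : ∃ x₀ : EuclideanSpace ℝ (Fin 3), w x₀ < 0) :
    0 < w 0 := by
  obtain ⟨x₀, hx₀⟩ := hneg
  have hsym : w (-x₀) = w x₀ := hrad _ _ (norm_neg x₀)
  have h := IsStable.zero_le_two_mul_apply_zero_add hstable x₀ 0
  rw [sub_zero, zero_sub, hsym] at h
  linarith

/-- A stable, continuous, compactly supported, spherically symmetric potential that
takes a negative value somewhere must have a positive core: `w(0) > 0`. -/
theorem stmt_16 (w : EuclideanSpace ℝ (Fin 3) → ℝ)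
    (hcont : Continuous w)
    (hcompact : HasCompactSupport w)
    (hrad : ∀ x y : EuclideanSpace ℝ (Fin 3), ‖x‖ = ‖y‖ → w x = w y)
    (hstable : ∃ Cst : ℝ, ∀ (N : ℕ) (x : Fin N → EuclideanSpace ℝ (Fin 3)),
      -(Cst * N) ≤ ∑ i : Fin N, ∑ j : Fin N,
        (if i ≠ j then w (x i - x j) else 0))
    (hneg : ∃ x₀ : EuclideanSpace ℝ (Fin 3), w x₀ < 0) :
    0 < w 0 :=
  stmt_16_general w hrad hstable hneg
end
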